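/- arXiv:0904.0104 — 10 statements merged into one kernel-verified Lean document; each statement's English description precedes it below -/
import Mathlib

section
/- For every integer n ≥ 4, f_n(1) > 0. -/
noncomputable def f (n x : ℝ) : ℝ :=
  -524288*n
  + 262144*(n+3)*(2*n-1)*x
  + 65536*(-2*n^3-43*n^2+49*n+27)*x^2
  + 16384*(2*n-1)*(62*n^2+31*n-345)*x^3
  + 2048*(-192*n^4-2332*n^3+8284*n^2-1023*n-6480)*x^4
  + 2048*(2*n-5)*(2*n-1)*(382*n^2+191*n-1605)*x^5
  + 256*(2*n-5)*(-920*n^4-9444*n^3+30262*n^2+5521*n-30240)*x^6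
  + 64*(2*n-5)^2*(2*n-1)*(4898*n^2+2449*n-15567)*x^7
  + 8*(2*n-5)^2*(-9024*n^4-89124*n^3+269348*n^2+71119*n-274320)*x^8
  + 12*(2*n-5)^3*(2*n-1)*(5934*n^2+2967*n-14017)*x^9
  + (2*n-5)^3*(-12004*n^4-126480*n^3+377253*n^2+34744*n-300735)*x^10
  + 3*(2*n-5)^4*(2*n-1)*(3078*n^2+1539*n-5155)*x^11
  + 3*(2*n-5)^4*(-344*n^4-4422*n^3+13645*n^2-4565*n-4442)*x^12
  + 6*(2*n-5)^5*(2*n-1)*(106*n^2+53*n-113)*x^13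
  + 3*(2*n-5)^5*(-12*n^4-252*n^3+845*n^2-830*n+311)*x^14
  + 9*(n+1)*(2*n-5)^6*(2*n-1)^2*x^15
  + 3*(2*n-5)^6*(3*n-4)*(-2*n^2+5*n-7)*x^16

/-! Substituting n = m + 4 turns f_n(1) into a polynomial in m whose coefficients are all positive. -/

open scoped NNReal

lemma f_add_four_one (m : ℝ) :
    f (m + 4) 1 = 1356912 + 6602904 * m + 12213192 * m ^ 2 + 11500064 * m ^ 3
      + 6146336 * m ^ 4 + 1944192 * m ^ 5 + 360832 * m ^ 6 + 36352 * m ^ 7 + 1536 * m ^ 8 := by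
  unfold f
  ring

lemma f_one_pos_of_four_le {x : ℝ} (hx : 4 ≤ x) : 0 < f x 1 := by
  obtain ⟨m, rfl⟩ : ∃ m : ℝ≥0, x = m + 4 :=
    ⟨(x - 4).toNNReal, by rw [Real.coe_toNNReal _ (by linarith)]; ring⟩
  rw [f_add_four_one]
  positivity

theorem stmt_1 (n : ℤ) (hn : 4 ≤ n) : 0 < f (n : ℝ) 1 :=
  f_one_pos_of_four_le (by exact_mod_cast hn)
end

section
/- For every integer n ≥ 5, f_n(17/10) < 0. -/
open scoped NNReal

/-! At `x = 17/10`, `f n x` is a polynomial of degree 9 in `n`; expanded around `n = 5`, all of its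
coefficients are negative, so it is negative for every `n ≥ 5`. -/

lemma ten_pow_sixteen_mul_f_five_add (m : ℝ) :
    10 ^ 16 * f (5 + m) (17 / 10) =
      -(2375459471975900057437500 + 37434767070688128502678125 * m
        + 103651929030368084523415625 * m ^ 2 + 131885489711907058331076250 * m ^ 3
        + 95931514181594436085898500 * m ^ 4 + 43274741600923805795069960 * m ^ 5
        + 12373465769695851958925104 * m ^ 6 + 2189118636501094094792672 * m ^ 7
        + 219129014907392089654464 * m ^ 8 + 9504591553625063640192 * m ^ 9) := by
  unfold f
  ring

lemma f_seventeen_tenths_neg {t : ℝ} (ht : 5 ≤ t) : f t (17 / 10) < 0 := by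
  obtain ⟨m, rfl⟩ : ∃ m : ℝ≥0, t = 5 + m :=
    ⟨(t - 5).toNNReal, by rw [Real.coe_toNNReal _ (by linarith)]; ring⟩
  have hneg : 10 ^ 16 * f (5 + m) (17 / 10) < 0 := by
    rw [ten_pow_sixteen_mul_f_five_add, neg_neg_iff_pos]
    positivity
  exact neg_of_mul_neg_right hneg (by norm_num)

theorem stmt_2 (n : ℤ) (hn : 5 ≤ n) : f (n : ℝ) (17/10) < 0 :=
  f_seventeen_tenths_neg (by exact_mod_cast hn)
end

section
/- For every integer n ≥ 5, there exists a real number x with 1 < x < 17/10 such that f_n(x) = 0. -/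
lemma continuous_f (n : ℝ) : Continuous (f n) := by
  unfold f
  fun_prop

lemma f_one_pos {n : ℝ} (hn : 5 ≤ n) : 0 < f n 1 := by
  obtain ⟨m, hm, rfl⟩ : ∃ m : ℝ, 0 ≤ m ∧ n = m + 5 := ⟨n - 5, by linarith, by ring⟩
  have expansion : f (m + 5) 1 = 40162320 + 102267528*m + 109252200*m^2 + 64102304*m^3
      + 22659616*m^4 + 4958592*m^5 + 658304*m^6 + 48640*m^7 + 1536*m^8 := by
    unfold f; ring
  rw [expansion]
  positivity

lemma f_seventeen_tenths_neg_s3 {n : ℝ} (hn : 5 ≤ n) : f n (17/10) < 0 := by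
  obtain ⟨m, hm, rfl⟩ : ∃ m : ℝ, 0 ≤ m ∧ n = m + 5 := ⟨n - 5, by linarith, by ring⟩
  have expansion : f (m + 5) (17/10) = -(2375459471975900057437500
      + 37434767070688128502678125*m + 103651929030368084523415625*m^2
      + 131885489711907058331076250*m^3 + 95931514181594436085898500*m^4
      + 43274741600923805795069960*m^5 + 12373465769695851958925104*m^6
      + 2189118636501094094792672*m^7 + 219129014907392089654464*m^8
      + 9504591553625063640192*m^9) / 10^16 := by
    unfold f; ring
  rw [expansion, neg_div, neg_neg_iff_pos]
  positivity

lemma exists_f_eq_zero_mem_Ioo {n : ℝ} (hn : 5 ≤ n) : ∃ x ∈ Set.Ioo 1 (17/10), f n x = 0 :=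
  intermediate_value_Ioo' (by norm_num) (continuous_f n).continuousOn
    ⟨f_seventeen_tenths_neg_s3 hn, f_one_pos hn⟩

theorem stmt_3 (n : ℤ) (hn : 5 ≤ n) :
    ∃ x : ℝ, 1 < x ∧ x < 17/10 ∧ f (n : ℝ) x = 0 := by
  obtain ⟨x, ⟨hx1, hx2⟩, hfx⟩ := exists_f_eq_zero_mem_Ioo (n := n) (by exact_mod_cast hn)
  exact ⟨x, hx1, hx2, hfx⟩
end

section
/- There exists a real number x with 1 < x < 5/3 such that p₆(x) = 0. -/
noncomputable def p6 (x : ℝ) : ℝ :=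
  94860*x^16 - 468000*x^15 + 1562520*x^14 - 4008000*x^13 + 8070115*x^12
  - 13885480*x^11 + 20117227*x^10 - 25245080*x^9 + 27575870*x^8
  - 25883264*x^7 + 21320504*x^6 - 14780736*x^5 + 8807200*x^4
  - 4242816*x^3 + 1608048*x^2 - 445824*x + 59616

theorem continuous_p6 : Continuous p6 := by
  unfold p6
  fun_prop

theorem p6_five_fourths_pos : 0 < p6 (5 / 4) := by
  norm_num [p6]

theorem p6_four_thirds_neg : p6 (4 / 3) < 0 := by
  norm_num [p6]

theorem stmt_8 : ∃ x : ℝ, 1 < x ∧ x < 5/3 ∧ p6 x = 0 := by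
  obtain ⟨x, ⟨hx_gt, hx_lt⟩, hx_root⟩ :=
    intermediate_value_Ioo' (by norm_num : (5 / 4 : ℝ) ≤ 4 / 3) continuous_p6.continuousOn
      ⟨p6_four_thirds_neg, p6_five_fourths_pos⟩
  exact ⟨x, by linarith, by linarith, hx_root⟩
end

section
/- The polynomial p₇ has at least four distinct real roots in the open interval (0, 2). -/
/-! `p7` takes the signs `+, -, +, -, +` at `1/2, 3/5, 1, 13/10, 8/5`, so the intermediate value
theorem gives a root in each of the four gaps. -/

noncomputable def p7 (x : ℝ) : ℝ :=
  24313856*x^16 - 128581632*x^15 + 482637824*x^14 - 1357332480*x^13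
  + 3043447808*x^12 - 5804421120*x^11 + 9347615296*x^10 - 13107483648*x^9
  + 15962982496*x^8 - 16875749376*x^7 + 15608426188*x^6 - 12310144128*x^5
  + 8333330528*x^4 - 4638529008*x^3 + 2039329151*x^2 - 672320880*x + 114663500

open Set

theorem exists_mem_Ioo_eq_zero_of_mul_neg {α : Type*} [ConditionallyCompleteLinearOrder α]
    [TopologicalSpace α] [OrderTopology α] [DenselyOrdered α] {f : α → ℝ} {a b : α}
    (hab : a ≤ b) (hf : ContinuousOn f (Icc a b)) (h : f a * f b < 0) :
    ∃ x ∈ Ioo a b, f x = 0 := by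
  rcases mul_neg_iff.1 h with ⟨ha, hb⟩ | ⟨ha, hb⟩
  · exact intermediate_value_Ioo' hab hf ⟨hb, ha⟩
  · exact intermediate_value_Ioo hab hf ⟨ha, hb⟩

theorem continuous_p7 : Continuous p7 := by
  unfold p7
  fun_prop

theorem stmt_10 :
    ∃ a b c d : ℝ, 0 < a ∧ a < b ∧ b < c ∧ c < d ∧ d < 2 ∧
      p7 a = 0 ∧ p7 b = 0 ∧ p7 c = 0 ∧ p7 d = 0 := by
  obtain ⟨h₁, h₂, h₃, h₄, h₅⟩ :
      0 < p7 (1/2) ∧ p7 (3/5) < 0 ∧ 0 < p7 1 ∧ p7 (13/10) < 0 ∧ 0 < p7 (8/5) := by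
    norm_num [p7]
  have root {l r : ℝ} (hlr : l ≤ r) (h : p7 l * p7 r < 0) : ∃ x ∈ Ioo l r, p7 x = 0 :=
    exists_mem_Ioo_eq_zero_of_mul_neg hlr continuous_p7.continuousOn h
  obtain ⟨a, ⟨ha₁, ha₂⟩, ha⟩ := root (by norm_num) (mul_neg_of_pos_of_neg h₁ h₂)
  obtain ⟨b, ⟨hb₁, hb₂⟩, hb⟩ := root (by norm_num) (mul_neg_of_neg_of_pos h₂ h₃)
  obtain ⟨c, ⟨hc₁, hc₂⟩, hc⟩ := root (by norm_num) (mul_neg_of_pos_of_neg h₃ h₄)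
  obtain ⟨d, ⟨hd₁, hd₂⟩, hd⟩ := root (by norm_num) (mul_neg_of_neg_of_pos h₄ h₅)
  refine ⟨a, b, c, d, ?_, ?_, ?_, ?_, ?_, ha, hb, hc, hd⟩ <;> linarith
end

section
/- The polynomial Q(x) = 11904x^8 − 30720x^7 + 56144x^6 − 86400x^5 + 80752x^4 − 79440x^3 + 42853x^2 − 23850x + 6293 satisfies Q(0) > 0, Q(1) < 0 and Q(2) > 0; consequently Q has at least two distinct positive real roots, one in the open interval (0, 1) and one in the open interval (1, 2). -/
noncomputable def Q (x : ℝ) : ℝ :=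
  11904*x^8 - 30720*x^7 + 56144*x^6 - 86400*x^5 + 80752*x^4
  - 79440*x^3 + 42853*x^2 - 23850*x + 6293

lemma continuous_Q : Continuous Q := by
  unfold Q
  fun_prop

lemma Q_zero : Q 0 = 6293 := by norm_num [Q]

lemma Q_one : Q 1 = -22464 := by norm_num [Q]

lemma Q_two : Q 2 = 730197 := by norm_num [Q]

theorem stmt_12 :
    0 < Q 0 ∧ Q 1 < 0 ∧ 0 < Q 2 ∧
    ∃ a b : ℝ, 0 < a ∧ a < 1 ∧ Q a = 0 ∧ 1 < b ∧ b < 2 ∧ Q b = 0 := by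
  have hQ0 : 0 < Q 0 := by norm_num [Q_zero]
  have hQ1 : Q 1 < 0 := by norm_num [Q_one]
  have hQ2 : 0 < Q 2 := by norm_num [Q_two]
  obtain ⟨a, ⟨ha₀, ha₁⟩, hQa⟩ : ∃ a ∈ Set.Ioo (0 : ℝ) 1, Q a = 0 :=
    intermediate_value_Ioo' zero_le_one continuous_Q.continuousOn ⟨hQ1, hQ0⟩
  obtain ⟨b, ⟨hb₁, hb₂⟩, hQb⟩ : ∃ b ∈ Set.Ioo (1 : ℝ) 2, Q b = 0 :=
    intermediate_value_Ioo one_le_two continuous_Q.continuousOn ⟨hQ1, hQ2⟩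
  exact ⟨hQ0, hQ1, hQ2, a, b, ha₀, ha₁, hQa, hb₁, hb₂, hQb⟩
end

section
/- Let u₀, u₁, u₂, x, e be positive real numbers with 6x^4 + 3x^2 − 4 ≠ 0, satisfying the five equations: (i) −u₀ + 8ex^2 − u₀x^2 = 0; (ii) −u₁^2 − 5x^2 + 48eu₁x^2 − 6u₁^2x^2 = 0; (iii) −1 + 24eu₂ − 5u₂^2 = 0; (iv) −80 + 160e + u₀ + 24u₁ + 5u₂ + 10x = 0; (v) u₀ + 4u₁ − 10x + 40ex^2 − 5x^3 = 0. Then either (u₀ = x and u₁ = x), or p₆(x) = 0, where p₆(x) = 94860x^16 − 468000x^15 + 1562520x^14 − 4008000x^13 + 8070115x^12 − 13885480x^11 + 20117227x^10 − 25245080x^9 + 27575870x^8 − 25883264x^7 + 21320504x^6 − 14780736x^5 + 8807200x^4 − 4242816x^3 + 1608048x^2 − 445824x + 59616. -/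
theorem quadratic_homogenize {R : Type*} [CommRing R] {a b c d n u : R}
    (hu : d * u = n) (h : a * u ^ 2 + b * u + c = 0) :
    a * n ^ 2 + b * d * n + c * d ^ 2 = 0 := by
  linear_combination d ^ 2 * h - (a * (n + d * u) + b * d) * hu

structure IsEinsteinIIb {R : Type*} [CommRing R] (u₀ u₁ u₂ x e : R) : Prop where
  eq₁ : -u₀ + 8*e*x^2 - u₀*x^2 = 0
  eq₂ : -u₁^2 - 5*x^2 + 48*e*u₁*x^2 - 6*u₁^2*x^2 = 0
  eq₃ : -1 + 24*e*u₂ - 5*u₂^2 = 0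
  eq₄ : -80 + 160*e + u₀ + 24*u₁ + 5*u₂ + 10*x = 0
  eq₅ : u₀ + 4*u₁ - 10*x + 40*e*x^2 - 5*x^3 = 0

namespace IsEinsteinIIb

section CommRing

variable {R : Type*} [CommRing R] {u₀ u₁ u₂ x e : R}

theorem four_mul_u₁ (hs : IsEinsteinIIb u₀ u₁ u₂ x e) :
    4*u₁ = 10*x + 5*x^3 - (6 + 5*x^2)*u₀ := by
  linear_combination hs.eq₅ - 5 * hs.eq₁

theorem sub_mul_eq_zero (hs : IsEinsteinIIb u₀ u₁ u₂ x e) :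
    (u₀ - x) * ((180 + 540*x^2 + 505*x^4 + 150*x^6) * u₀
      - (180*x + 700*x^3 + 625*x^5 + 150*x^7)) = 0 := by
  linear_combination -16 * hs.eq₂ + 96 * u₁ * hs.eq₁
    + (24*(1 + x^2)*u₀ - (1 + 6*x^2)*(4*u₁ + 10*x + 5*x^3 - (6 + 5*x^2)*u₀)) * hs.four_mul_u₁

end CommRing

section Field

variable {K : Type*} [Field K] [CharZero K] {u₀ u₁ u₂ x e : K}

theorem u₁_eq_of_u₀_eq (hs : IsEinsteinIIb u₀ u₁ u₂ x e) (h : u₀ = x) : u₁ = x := by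
  subst h
  linear_combination hs.eq₅ / 4 - 5 * hs.eq₁ / 4

theorem sq_mul_u₂ (hs : IsEinsteinIIb u₀ u₁ u₂ x e) :
    x^2*u₂ = 16*x^2 - 14*x^3 - 6*x^5 + (6*x^4 + 3*x^2 - 4)*u₀ := by
  linear_combination x^2 * hs.eq₄ / 5 - 4 * hs.eq₁ - 6 * x^2 * hs.four_mul_u₁ / 5

theorem quadratic_u₀ (hs : IsEinsteinIIb u₀ u₁ u₂ x e) :
    3*(1 + x^2)*u₀*(16*x^2 - 14*x^3 - 6*x^5 + (6*x^4 + 3*x^2 - 4)*u₀)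
      - 5*(16*x^2 - 14*x^3 - 6*x^5 + (6*x^4 + 3*x^2 - 4)*u₀)^2 - x^4 = 0 := by
  rw [← hs.sq_mul_u₂]
  linear_combination x^4 * hs.eq₃ - 3 * x^2 * u₂ * hs.eq₁

end Field

end IsEinsteinIIb

theorem p6_eq_zero_of_quadratic_of_linear {u x : ℝ} (hx : x ≠ 0)
    (hlin : (180 + 540*x^2 + 505*x^4 + 150*x^6) * u = 180*x + 700*x^3 + 625*x^5 + 150*x^7)
    (hquad : 3*(1 + x^2)*u*(16*x^2 - 14*x^3 - 6*x^5 + (6*x^4 + 3*x^2 - 4)*u)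
      - 5*(16*x^2 - 14*x^3 - 6*x^5 + (6*x^4 + 3*x^2 - 4)*u)^2 - x^4 = 0) :
    p6 x = 0 := by
  have hhom := quadratic_homogenize hlin
    (a := 3*(1 + x^2)*(6*x^4 + 3*x^2 - 4) - 5*(6*x^4 + 3*x^2 - 4)^2)
    (b := 3*(1 + x^2)*(16*x^2 - 14*x^3 - 6*x^5)
      - 10*(16*x^2 - 14*x^3 - 6*x^5)*(6*x^4 + 3*x^2 - 4))
    (c := -5*(16*x^2 - 14*x^3 - 6*x^5)^2 - x^4) (by linear_combination hquad)
  have h : -50 * x^2 * p6 x = 0 := by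
    unfold p6
    linear_combination hhom
  simpa [hx] using h

theorem stmt_14_general (u₀ u₁ u₂ x e : ℝ)
    (hx : 0 < x)
    (h1 : -u₀ + 8*e*x^2 - u₀*x^2 = 0)
    (h2 : -u₁^2 - 5*x^2 + 48*e*u₁*x^2 - 6*u₁^2*x^2 = 0)
    (h3 : -1 + 24*e*u₂ - 5*u₂^2 = 0)
    (h4 : -80 + 160*e + u₀ + 24*u₁ + 5*u₂ + 10*x = 0)
    (h5 : u₀ + 4*u₁ - 10*x + 40*e*x^2 - 5*x^3 = 0) :
    (u₀ = x ∧ u₁ = x) ∨ p6 x = 0 := by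
  have hs : IsEinsteinIIb u₀ u₁ u₂ x e := ⟨h1, h2, h3, h4, h5⟩
  rcases mul_eq_zero.mp hs.sub_mul_eq_zero with hnr | hlin
  · have h₀ : u₀ = x := sub_eq_zero.mp hnr
    exact .inl ⟨h₀, hs.u₁_eq_of_u₀_eq h₀⟩
  · exact .inr (p6_eq_zero_of_quadratic_of_linear hx.ne' (sub_eq_zero.mp hlin) hs.quadratic_u₀)

theorem stmt_14 (u₀ u₁ u₂ x e : ℝ)
    (hu₀ : 0 < u₀) (hu₁ : 0 < u₁) (hu₂ : 0 < u₂) (hx : 0 < x) (he : 0 < e)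
    (hnd : 6*x^4 + 3*x^2 - 4 ≠ 0)
    (h1 : -u₀ + 8*e*x^2 - u₀*x^2 = 0)
    (h2 : -u₁^2 - 5*x^2 + 48*e*u₁*x^2 - 6*u₁^2*x^2 = 0)
    (h3 : -1 + 24*e*u₂ - 5*u₂^2 = 0)
    (h4 : -80 + 160*e + u₀ + 24*u₁ + 5*u₂ + 10*x = 0)
    (h5 : u₀ + 4*u₁ - 10*x + 40*e*x^2 - 5*x^3 = 0) :
    (u₀ = x ∧ u₁ = x) ∨ p6 x = 0 :=
  stmt_14_general u₀ u₁ u₂ x e hx h1 h2 h3 h4 h5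
end

section
/- Let u₀, u₁, u₂, x, e be positive real numbers with 20x^4 + 11x^2 − 20 ≠ 0, satisfying the five equations: (i) −5u₀ + 36ex^2 − 4u₀x^2 = 0; (ii) −u₁^2 − 4x^2 + 36eu₁x^2 − 4u₁^2x^2 = 0; (iii) −1 + 36eu₂ − 8u₂^2 = 0; (iv) −144 + 288e + u₀ + 45u₁ + 6u₂ + 20x = 0; (v) u₀ + 9u₁ − 20x + 72ex^2 − 8x^3 = 0. Then either (u₀ = x and u₁ = x), or p₇(x) = 0, where p₇(x) = 24313856x^16 − 128581632x^15 + 482637824x^14 − 1357332480x^13 + 3043447808x^12 − 5804421120x^11 + 9347615296x^10 − 13107483648x^9 + 15962982496x^8 − 16875749376x^7 + 15608426188x^6 − 12310144128x^5 + 8333330528x^4 − 4638529008x^3 + 2039329151x^2 − 672320880x + 114663500. -/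
namespace E7TypeIIb

def u₀Den (x : ℝ) : ℝ := 2 * (x^2 + 1) * (4*x^2 + 7) * (8*x^2 + 11)

def u₀Num (x : ℝ) : ℝ := x * (64*x^6 + 336*x^4 + 480*x^2 + 181)

noncomputable def u₀Of (x : ℝ) : ℝ := u₀Num x / u₀Den x

noncomputable def u₁Of (x : ℝ) : ℝ := x * (8*x^2 + 11) / (2 * (x^2 + 1) * (4*x^2 + 7))

noncomputable def eOf (x : ℝ) : ℝ := (4*x^2 + 5) * u₀Of x / (36 * x^2)

noncomputable def u₂Of (x : ℝ) : ℝ := (144 - 288 * eOf x - u₀Of x - 45 * u₁Of x - 20*x) / 6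

variable {u₀ u₁ u₂ x e : ℝ}

lemma u₀Den_pos (x : ℝ) : 0 < u₀Den x := by
  unfold u₀Den
  positivity

lemma residual_iii_eq (hx : x ≠ 0) :
    -1 + 36 * eOf x * u₂Of x - 8 * u₂Of x ^ 2 = -p7 x / (9 * x^2 * u₀Den x ^ 2) := by
  have hden := (u₀Den_pos x).ne'
  rw [u₂Of, eOf, u₁Of, u₀Of, eq_div_iff (by positivity)]
  field_simp
  unfold p7 u₀Num u₀Den
  ring

lemma nine_mul_u₁_eq (h1 : -5*u₀ + 36*e*x^2 - 4*u₀*x^2 = 0)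
    (h5 : u₀ + 9*u₁ - 20*x + 72*e*x^2 - 8*x^3 = 0) :
    9 * u₁ = 4 * x * (2*x^2 + 5) - (8*x^2 + 11) * u₀ := by
  linear_combination h5 - 2 * h1

lemma eq_or_u₀Den_mul_eq (h1 : -5*u₀ + 36*e*x^2 - 4*u₀*x^2 = 0)
    (h2 : -u₁^2 - 4*x^2 + 36*e*u₁*x^2 - 4*u₁^2*x^2 = 0)
    (h5 : u₀ + 9*u₁ - 20*x + 72*e*x^2 - 8*x^3 = 0) :
    u₀ = x ∨ u₀Den x * u₀ = u₀Num x := by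
  have hu₁ := nine_mul_u₁_eq h1 h5
  have hquad : (u₀ - x) * (u₀Den x * u₀ - u₀Num x) = 0 := by
    unfold u₀Den u₀Num
    linear_combination (-81/4) * (h2 - u₁ * h1) + (1/4) * (9 * u₀ * (4*x^2 + 5)
      - (4*x^2 + 1) * (9 * u₁ + 4 * x * (2*x^2 + 5) - (8*x^2 + 11) * u₀)) * hu₁
  exact (mul_eq_zero.mp hquad).imp sub_eq_zero.mp sub_eq_zero.mp

lemma u₁_eq_of_u₀_eq (h1 : -5*u₀ + 36*e*x^2 - 4*u₀*x^2 = 0)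
    (h5 : u₀ + 9*u₁ - 20*x + 72*e*x^2 - 8*x^3 = 0) (hu₀ : u₀ = x) : u₁ = x := by
  have hu₁ := nine_mul_u₁_eq h1 h5
  rw [hu₀] at hu₁
  linear_combination hu₁ / 9

lemma u₀_eq_u₀Of (hu₀ : u₀Den x * u₀ = u₀Num x) : u₀ = u₀Of x := by
  rw [u₀Of, eq_div_iff (u₀Den_pos x).ne', mul_comm, hu₀]

lemma u₁_eq_u₁Of (h1 : -5*u₀ + 36*e*x^2 - 4*u₀*x^2 = 0)
    (h5 : u₀ + 9*u₁ - 20*x + 72*e*x^2 - 8*x^3 = 0) (hu₀ : u₀Den x * u₀ = u₀Num x) :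
    u₁ = u₁Of x := by
  have hu₁ := nine_mul_u₁_eq h1 h5
  have hscaled : u₀Den x * u₁ = x * (8*x^2 + 11) ^ 2 := by
    unfold u₀Den u₀Num at *
    linear_combination (2 * (x^2 + 1) * (4*x^2 + 7) * (8*x^2 + 11) / 9) * hu₁
      - ((8*x^2 + 11) / 9) * hu₀
  rw [u₁Of, eq_div_iff (by positivity)]
  refine mul_left_cancel₀ (by positivity : (8*x^2 + 11 : ℝ) ≠ 0) ?_
  unfold u₀Den at hscaled
  linear_combination hscaled

lemma e_eq_eOf (hx : x ≠ 0) (h1 : -5*u₀ + 36*e*x^2 - 4*u₀*x^2 = 0)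
    (hu₀ : u₀Den x * u₀ = u₀Num x) : e = eOf x := by
  rw [eOf, ← u₀_eq_u₀Of hu₀, eq_div_iff (by positivity)]
  linear_combination h1

lemma p7_eq_zero_of_u₀Den_mul_eq (hx : x ≠ 0) (h1 : -5*u₀ + 36*e*x^2 - 4*u₀*x^2 = 0)
    (h3 : -1 + 36*e*u₂ - 8*u₂^2 = 0) (h4 : -144 + 288*e + u₀ + 45*u₁ + 6*u₂ + 20*x = 0)
    (h5 : u₀ + 9*u₁ - 20*x + 72*e*x^2 - 8*x^3 = 0) (hu₀ : u₀Den x * u₀ = u₀Num x) :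
    p7 x = 0 := by
  have he := e_eq_eOf hx h1 hu₀
  have hu₂ : u₂ = u₂Of x := by
    rw [u₂Of, ← he, ← u₀_eq_u₀Of hu₀, ← u₁_eq_u₁Of h1 h5 hu₀]
    linear_combination h4 / 6
  rw [he, hu₂, residual_iii_eq hx, neg_div, neg_eq_zero] at h3
  exact (div_eq_zero_iff.mp h3).resolve_right (by have := (u₀Den_pos x).ne'; positivity)

end E7TypeIIb

open E7TypeIIb in
theorem stmt_15_general (u₀ u₁ u₂ x e : ℝ)
    (hx : 0 < x)
    (h1 : -5*u₀ + 36*e*x^2 - 4*u₀*x^2 = 0)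
    (h2 : -u₁^2 - 4*x^2 + 36*e*u₁*x^2 - 4*u₁^2*x^2 = 0)
    (h3 : -1 + 36*e*u₂ - 8*u₂^2 = 0)
    (h4 : -144 + 288*e + u₀ + 45*u₁ + 6*u₂ + 20*x = 0)
    (h5 : u₀ + 9*u₁ - 20*x + 72*e*x^2 - 8*x^3 = 0) :
    (u₀ = x ∧ u₁ = x) ∨ p7 x = 0 := by
  rcases eq_or_u₀Den_mul_eq h1 h2 h5 with hu₀ | hu₀
  · exact Or.inl ⟨hu₀, u₁_eq_of_u₀_eq h1 h5 hu₀⟩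
  · exact Or.inr (p7_eq_zero_of_u₀Den_mul_eq hx.ne' h1 h3 h4 h5 hu₀)

theorem stmt_15 (u₀ u₁ u₂ x e : ℝ)
    (hu₀ : 0 < u₀) (hu₁ : 0 < u₁) (hu₂ : 0 < u₂) (hx : 0 < x) (he : 0 < e)
    (hnd : 20*x^4 + 11*x^2 - 20 ≠ 0)
    (h1 : -5*u₀ + 36*e*x^2 - 4*u₀*x^2 = 0)
    (h2 : -u₁^2 - 4*x^2 + 36*e*u₁*x^2 - 4*u₁^2*x^2 = 0)
    (h3 : -1 + 36*e*u₂ - 8*u₂^2 = 0)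
    (h4 : -144 + 288*e + u₀ + 45*u₁ + 6*u₂ + 20*x = 0)
    (h5 : u₀ + 9*u₁ - 20*x + 72*e*x^2 - 8*x^3 = 0) :
    (u₀ = x ∧ u₁ = x) ∨ p7 x = 0 :=
  stmt_15_general u₀ u₁ u₂ x e hx h1 h2 h3 h4 h5
end

section
/- Let u₀, u₁, x, e be positive real numbers with 5x^4 + 2x^2 − 2 ≠ 0, satisfying the four equations: (i) −4u₀ + 36ex^2 − 5u₀x^2 = 0; (ii) −u₁^2 − 7x^2 + 72eu₁x^2 − 10u₁^2x^2 = 0; (iii) −126 + 252e + u₀ + 48u₁ + 14x = 0; (iv) 4u₀ + 24u₁ − 56x + 252ex^2 − 35x^3 = 0. Then x = 1, or x = 2/7, or 6250x^8 − 15750x^7 + 27125x^6 − 41175x^5 + 36030x^4 − 34560x^3 + 17248x^2 − 9216x + 2048 = 0. -/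
/-!
Equation (iii) is linear in `e`, and after eliminating `e` equation (i) is linear in `u₀`.
Eliminating both from (iv) and (ii) leaves a linear and a quadratic equation in `u₁` whose
coefficients are polynomials in `x`. They have a common root `u₁`, so their resultant vanishes;
it factors as `x² (9x² + 7) (x - 1) (7x - 2)` times the octic, and the first two factors are
positive.
-/

theorem resultant_linear_quadratic_eq_zero {R : Type*} [CommRing R] {a b A B C u : R}
    (hlin : a * u + b = 0) (hquad : A * u ^ 2 + B * u + C = 0) :
    A * b ^ 2 - a * b * B + a ^ 2 * C = 0 := by
  linear_combination a ^ 2 * hquad - (A * (a * u - b) + B * a) * hlin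

namespace E7TypeIb

variable {u₀ u₁ x e : ℝ}

theorem u₀_mul_eq (h1 : -4*u₀ + 36*e*x^2 - 5*u₀*x^2 = 0)
    (h3 : -126 + 252*e + u₀ + 48*u₁ + 14*x = 0) :
    u₀ * (28 + 36*x^2) = x^2 * (126 - 48*u₁ - 14*x) := by
  linear_combination (-7)*h1 + x^2*h3

theorem linear_in_u₁ (h1 : -4*u₀ + 36*e*x^2 - 5*u₀*x^2 = 0)
    (h3 : -126 + 252*e + u₀ + 48*u₁ + 14*x = 0)
    (h4 : 4*u₀ + 24*u₁ - 56*x + 252*e*x^2 - 35*x^3 = 0) :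
    24*(5*x^4 + 2*x^2 - 2) * u₁ + x*(125*x^4 - 315*x^3 + 246*x^2 - 288*x + 112) = 0 := by
  linear_combination (-1/14) * ((28 + 36*x^2)*h4 - (28 + 36*x^2)*x^2*h3
    - (4 - x^2)*u₀_mul_eq h1 h3)

theorem quadratic_in_u₁ (h1 : -4*u₀ + 36*e*x^2 - 5*u₀*x^2 = 0)
    (h2 : -u₁^2 - 7*x^2 + 72*e*u₁*x^2 - 10*u₁^2*x^2 = 0)
    (h3 : -126 + 252*e + u₀ + 48*u₁ + 14*x = 0) :
    (30*x^4 + 25*x^2 + 1) * u₁^2 + x^2*(5*x^3 - 45*x^2 + 4*x - 36) * u₁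
      + x^2*(9*x^2 + 7) = 0 := by
  linear_combination (-1/196) * (7*(28 + 36*x^2)*h2 - 2*u₁*x^2*(28 + 36*x^2)*h3
    + 2*u₁*x^2*u₀_mul_eq h1 h3)

end E7TypeIb

open E7TypeIb in
theorem stmt_16_general (u₀ u₁ x e : ℝ)
    (hx : 0 < x)
    (h1 : -4*u₀ + 36*e*x^2 - 5*u₀*x^2 = 0)
    (h2 : -u₁^2 - 7*x^2 + 72*e*u₁*x^2 - 10*u₁^2*x^2 = 0)
    (h3 : -126 + 252*e + u₀ + 48*u₁ + 14*x = 0)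
    (h4 : 4*u₀ + 24*u₁ - 56*x + 252*e*x^2 - 35*x^3 = 0) :
    x = 1 ∨ x = 2/7 ∨
      6250*x^8 - 15750*x^7 + 27125*x^6 - 41175*x^5 + 36030*x^4
        - 34560*x^3 + 17248*x^2 - 9216*x + 2048 = 0 := by
  have hres := resultant_linear_quadratic_eq_zero (linear_in_u₁ h1 h3 h4)
    (quadratic_in_u₁ h1 h2 h3)
  have hfactor : x^2 * (9*x^2 + 7) * ((x - 1) * (7*x - 2) *
      (6250*x^8 - 15750*x^7 + 27125*x^6 - 41175*x^5 + 36030*x^4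
        - 34560*x^3 + 17248*x^2 - 9216*x + 2048)) = 0 := by
    linear_combination hres
  have hpos : x^2 * (9*x^2 + 7) ≠ 0 := by positivity
  have hroots := (mul_eq_zero.mp hfactor).resolve_left hpos
  rw [mul_eq_zero, mul_eq_zero] at hroots
  rcases hroots with (h | h) | h
  · exact Or.inl (by linarith)
  · exact Or.inr (Or.inl (by linarith))
  · exact Or.inr (Or.inr h)

theorem stmt_16 (u₀ u₁ x e : ℝ)
    (hu₀ : 0 < u₀) (hu₁ : 0 < u₁) (hx : 0 < x) (he : 0 < e)
    (hnd : 5*x^4 + 2*x^2 - 2 ≠ 0)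
    (h1 : -4*u₀ + 36*e*x^2 - 5*u₀*x^2 = 0)
    (h2 : -u₁^2 - 7*x^2 + 72*e*u₁*x^2 - 10*u₁^2*x^2 = 0)
    (h3 : -126 + 252*e + u₀ + 48*u₁ + 14*x = 0)
    (h4 : 4*u₀ + 24*u₁ - 56*x + 252*e*x^2 - 35*x^3 = 0) :
    x = 1 ∨ x = 2/7 ∨
      6250*x^8 - 15750*x^7 + 27125*x^6 - 41175*x^5 + 36030*x^4
        - 34560*x^3 + 17248*x^2 - 9216*x + 2048 = 0 :=
  stmt_16_general u₀ u₁ x e hx h1 h2 h3 h4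
end

section
/- Let u₀, u₁, x, e be positive real numbers with 7x^4 + 19x^2 − 28 ≠ 0, satisfying the four equations: (i) −7u₀ + 36ex^2 − 2u₀x^2 = 0; (ii) −2u₁^2 − 5x^2 + 36eu₁x^2 − 2u₁^2x^2 = 0; (iii) −72 + 144e + u₀ + 21u₁ + 14x = 0; (iv) u₀ + 6u₁ − 14x + 36ex^2 − 2x^3 = 0. Then x = 1 or x = 7/11. -/
/-!
Equations (i), (iii), (iv) are linear in `u₀, u₁, e`; solving them expresses `36 e x²`, `u₀` and
`6 u₁`, each multiplied by `D = 7x⁴ + 19x² − 28`, as polynomials in `x`. Substituting into (ii),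
multiplied by `D²`, leaves `x² (x − 1)(11x − 7) P(x) = 0` with `P` the octic of the paper, and `P`
is a sum of squares plus a positive constant, so it has no real root.
-/

lemma octic_pos (x : ℝ) :
    0 < 46*x^8 - 144*x^7 + 767*x^6 - 1728*x^5 + 4116*x^4 - 6696*x^3 + 8119*x^2 - 8352*x + 4004 := by
  have hsos : 46*x^8 - 144*x^7 + 767*x^6 - 1728*x^5 + 4116*x^4 - 6696*x^3 + 8119*x^2 - 8352*x + 4004
      = (1/4003)*(4003 - 4176*x + 321*x^2 + 154*x^3 - 22*x^4)^2
      + (1/49987270356)*(12487452*x - 12678010*x^2 + 406927*x^3 + 724740*x^4)^2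
      + (1/40379810836778580)*(6467261830*x^2 - 6101009851*x^3 + 396952332*x^4)^2
      + (1/3302437866036840813270)*(510639270969*x^3 - 110445933148*x^4)^2
      + (13672622277881/510639270969)*(x^4)^2
      + (1 + x^2 + x^4 + x^6 + x^8) := by ring
  rw [hsos]
  positivity

section LinearPart

variable {u₀ u₁ x e : ℝ}

lemma einstein_e_mul_eq (h1 : -7*u₀ + 36*e*x^2 - 2*u₀*x^2 = 0)
    (h3 : -72 + 144*e + u₀ + 21*u₁ + 14*x = 0)
    (h4 : u₀ + 6*u₁ - 14*x + 36*e*x^2 - 2*x^3 = 0) :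
    36*e*x^2*(7*x^4 + 19*x^2 - 28) = x^2*(7*x^3 + 63*x - 72)*(7 + 2*x^2) := by
  linear_combination ((7 + 2*x^2)*x^2*(7/2))*h4 - ((7 + 2*x^2)*x^2)*h3 + (5*x^2/2)*h1

lemma einstein_u₀_mul_eq (h1 : -7*u₀ + 36*e*x^2 - 2*u₀*x^2 = 0)
    (h3 : -72 + 144*e + u₀ + 21*u₁ + 14*x = 0)
    (h4 : u₀ + 6*u₁ - 14*x + 36*e*x^2 - 2*x^3 = 0) :
    u₀*(7*x^4 + 19*x^2 - 28) = x^2*(7*x^3 + 63*x - 72) := by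
  have hD : (7 + 2*x^2 : ℝ) ≠ 0 := by positivity
  refine mul_right_cancel₀ hD ?_
  linear_combination einstein_e_mul_eq h1 h3 h4 - (7*x^4 + 19*x^2 - 28)*h1

lemma einstein_u₁_mul_eq (h1 : -7*u₀ + 36*e*x^2 - 2*u₀*x^2 = 0)
    (h3 : -72 + 144*e + u₀ + 21*u₁ + 14*x = 0)
    (h4 : u₀ + 6*u₁ - 14*x + 36*e*x^2 - 2*x^3 = 0) :
    6*u₁*(7*x^4 + 19*x^2 - 28)
      = (14*x + 2*x^3)*(7*x^4 + 19*x^2 - 28) - x^2*(7*x^3 + 63*x - 72)*(8 + 2*x^2) := by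
  linear_combination (7*x^4 + 19*x^2 - 28)*h4 - einstein_e_mul_eq h1 h3 h4
    - einstein_u₀_mul_eq h1 h3 h4

lemma einstein_eliminant (h1 : -7*u₀ + 36*e*x^2 - 2*u₀*x^2 = 0)
    (h2 : -2*u₁^2 - 5*x^2 + 36*e*u₁*x^2 - 2*u₁^2*x^2 = 0)
    (h3 : -72 + 144*e + u₀ + 21*u₁ + 14*x = 0)
    (h4 : u₀ + 6*u₁ - 14*x + 36*e*x^2 - 2*x^3 = 0) :
    x^2*((x - 1)*(11*x - 7))*(46*x^8 - 144*x^7 + 767*x^6 - 1728*x^5 + 4116*x^4 - 6696*x^3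
      + 8119*x^2 - 8352*x + 4004) = 0 := by
  linear_combination (-9/4*(7*x^4 + 19*x^2 - 28)^2)*h2
    + (3/8*(6*u₁*(7*x^4 + 19*x^2 - 28)))*einstein_e_mul_eq h1 h3 h4
    - 1/8*((1 + x^2)*(6*u₁*(7*x^4 + 19*x^2 - 28) + (14*x + 2*x^3)*(7*x^4 + 19*x^2 - 28)
        - x^2*(7*x^3 + 63*x - 72)*(8 + 2*x^2)) - 3*x^2*(7*x^3 + 63*x - 72)*(7 + 2*x^2))
      * einstein_u₁_mul_eq h1 h3 h4

end LinearPart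

theorem stmt_18_general (u₀ u₁ x e : ℝ)
    (hx : 0 < x)
    (h1 : -7*u₀ + 36*e*x^2 - 2*u₀*x^2 = 0)
    (h2 : -2*u₁^2 - 5*x^2 + 36*e*u₁*x^2 - 2*u₁^2*x^2 = 0)
    (h3 : -72 + 144*e + u₀ + 21*u₁ + 14*x = 0)
    (h4 : u₀ + 6*u₁ - 14*x + 36*e*x^2 - 2*x^3 = 0) :
    x = 1 ∨ x = 7/11 := by
  have hquad : (x - 1)*(11*x - 7) = 0 := by
    have h := einstein_eliminant h1 h2 h3 h4
    rw [mul_eq_zero, mul_eq_zero] at h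
    rcases h with (hx2 | hq) | hP
    · exact absurd hx2 (by positivity)
    · exact hq
    · exact absurd hP (octic_pos x).ne'
  rcases mul_eq_zero.mp hquad with h | h
  · left; linarith
  · right; linarith

theorem stmt_18 (u₀ u₁ x e : ℝ)
    (hu₀ : 0 < u₀) (hu₁ : 0 < u₁) (hx : 0 < x) (he : 0 < e)
    (hnd : 7*x^4 + 19*x^2 - 28 ≠ 0)
    (h1 : -7*u₀ + 36*e*x^2 - 2*u₀*x^2 = 0)
    (h2 : -2*u₁^2 - 5*x^2 + 36*e*u₁*x^2 - 2*u₁^2*x^2 = 0)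
    (h3 : -72 + 144*e + u₀ + 21*u₁ + 14*x = 0)
    (h4 : u₀ + 6*u₁ - 14*x + 36*e*x^2 - 2*x^3 = 0) :
    x = 1 ∨ x = 7/11 :=
  stmt_18_general u₀ u₁ x e hx h1 h2 h3 h4
end
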